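/- Let J ⊆ ℝ be an interval with 0 ∈ J, let α ∈ ℕ₀ and β ∈ ℝ with β ≥ α, and let a, b ∈ ℝ with a = 0 if α = 0 and b = 0 if β = 0. Let g₁ : (0,2) → J satisfy lim_{t↓0} g₁(t) = 0 and g₁(t) = a·t^α + b·t^β + q(t) with q ∈ Q_{α,β}, and let g₂ ∈ C^∞(J). Then the function t ↦ g₂(g₁(t)) − g₂(0) − g₂'(0)·a·t^α − g₂'(0)·b·t^β, defined on (0,2), belongs to Q_{α,β}. -/

import Mathlib

open Set Filter

noncomputable section

/-- `P_{α,β}`: finite sums of real powers `t^{α_i}` on `(0,2)`, where integer exponents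
exceed `α` and non-integer exponents exceed `β`. -/
def Pclass (α β : ℝ) : Set (ℝ → ℝ) :=
  { f | ∃ (n : ℕ) (a : Fin n → ℝ) (e : Fin n → ℝ),
      (∀ i, (∃ z : ℤ, e i = (z : ℝ)) → α < e i) ∧
      (∀ i, (¬ ∃ z : ℤ, e i = (z : ℝ)) → β < e i) ∧
      (∀ t ∈ Set.Ioo (0 : ℝ) 2, f t = ∑ i, a i * t ^ (e i)) }

/-- `R_{γ'}`: functions that are `C^∞` on `(0,2)` and whose `m`-th derivatives are
`O(t^{γ'-m})` as `t ↓ 0`. -/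
def Rclass (γ' : ℝ) : Set (ℝ → ℝ) :=
  { f | ContDiffOn ℝ (⊤ : ℕ∞) f (Set.Ioo (0 : ℝ) 2) ∧
      ∀ m : ℕ, ∃ C : ℝ, ∃ ε > (0 : ℝ), ∀ t ∈ Set.Ioo (0 : ℝ) (min ε 2),
        |iteratedDerivWithin m f (Set.Ioo (0 : ℝ) 2) t| ≤ C * t ^ (γ' - m) }

/-- `Q_{α,β} = ∩_{γ'} (P_{α,β} + R_{γ'})` (as functions on `(0,2)`). -/
def Qclass (α β : ℝ) : Set (ℝ → ℝ) :=
  { f | ∀ γ' : ℝ, ∃ p ∈ Pclass α β, ∃ r ∈ Rclass γ',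
      ∀ t ∈ Set.Ioo (0 : ℝ) 2, f t = p t + r t }

/-!
Taylor-expand `g₂` at `0` to order `N + 1`:
`g₂ y = g₂ 0 + g₂'(0) y + ∑_{k = 2}^{N + 1} c_k y^k + G y`, where `G` vanishes to order `N + 2`
at `0`. The class `Q_{α,β}` is closed under sums, products and multiplication by `t^α` and `t^β`,
and the square of `a t^α + b t^β` lies in `P_{α,β}`, so every power `g₁^k` with `k ≥ 2` lies in
`Q_{α,β}`. Finally `g₁ ∈ R_δ` for some `δ > 0`, and the chain and Leibniz rules give
`G ∘ g₁ ∈ R_{(N+2)δ}`, which lies in `R_{γ'}` once `N` is large.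
-/

open Asymptotics Topology

local notation "I₀" => Set.Ioo (0 : ℝ) 2

lemma eventually_nhdsWithin_Ioo_iff {p : ℝ → Prop} :
    (∀ᶠ t in 𝓝[I₀] 0, p t) ↔ ∃ ε > 0, ∀ t ∈ Ioo 0 (min ε 2), p t := by
  rw [nhdsWithin_Ioo_eq_nhdsGT two_pos, (nhdsGT_basis (0 : ℝ)).eventually_iff]
  exact ⟨fun ⟨ε, hε, h⟩ => ⟨ε, hε, fun t ht => h ⟨ht.1, ht.2.trans_le (min_le_left _ _)⟩⟩,
    fun ⟨ε, hε, h⟩ => ⟨min ε 2, lt_min hε two_pos, h⟩⟩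

lemma mem_Rclass_iff {σ : ℝ} {f : ℝ → ℝ} :
    f ∈ Rclass σ ↔ ContDiffOn ℝ (⊤ : ℕ∞) f I₀ ∧
      ∀ m : ℕ, iteratedDerivWithin m f I₀ =O[𝓝[I₀] 0] fun t => t ^ (σ - m) := by
  refine and_congr_right' (forall_congr' fun m => ?_)
  simp_rw [isBigO_iff, eventually_nhdsWithin_Ioo_iff]
  refine exists_congr fun C => exists_congr fun ε =>
    and_congr_right' <| forall₂_congr fun t ht => ?_
  rw [Real.norm_eq_abs, Real.norm_eq_abs, abs_of_pos (Real.rpow_pos_of_pos ht.1 _)]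

lemma Ioo_zero_one_mem_nhdsWithin : Ioo (0 : ℝ) 1 ∈ 𝓝[I₀] 0 := by
  rw [nhdsWithin_Ioo_eq_nhdsGT two_pos]
  exact Ioo_mem_nhdsGT one_pos

lemma rpow_isBigO_rpow_of_le {σ τ : ℝ} (h : τ ≤ σ) :
    (fun t : ℝ => t ^ σ) =O[𝓝[I₀] 0] fun t => t ^ τ := by
  refine IsBigO.of_bound 1 ?_
  filter_upwards [Ioo_zero_one_mem_nhdsWithin] with t ht
  rw [one_mul, Real.norm_of_nonneg (Real.rpow_nonneg ht.1.le _),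
    Real.norm_of_nonneg (Real.rpow_nonneg ht.1.le _)]
  exact Real.rpow_le_rpow_of_exponent_ge ht.1 ht.2.le h

lemma Rclass_antitone : Antitone Rclass := fun τ σ h f hf => by
  rw [mem_Rclass_iff] at hf ⊢
  exact ⟨hf.1, fun m => (hf.2 m).trans (rpow_isBigO_rpow_of_le (by linarith))⟩


lemma rpow_mem_Rclass (e : ℝ) : (fun t : ℝ => t ^ e) ∈ Rclass e := by
  rw [mem_Rclass_iff]
  refine ⟨fun t ht => (Real.contDiffAt_rpow_const_of_ne ht.1.ne').contDiffWithinAt, fun m => ?_⟩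
  refine (isBigO_const_mul_self ((descPochhammer ℝ m).eval e) _ _).congr' ?_ EventuallyEq.rfl
  filter_upwards [self_mem_nhdsWithin] with t ht
  rw [iteratedDerivWithin_of_isOpen_eq_iterate isOpen_Ioo ht, Real.iter_deriv_rpow_const]

lemma isBigO_iteratedDerivWithin_mul {f g : ℝ → ℝ} (hf : ContDiffOn ℝ (⊤ : ℕ∞) f I₀)
    (hg : ContDiffOn ℝ (⊤ : ℕ∞) g I₀) {σ τ : ℝ} {m : ℕ}
    (hfm : ∀ i ≤ m, iteratedDerivWithin i f I₀ =O[𝓝[I₀] 0] fun t => t ^ (σ - i))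
    (hgm : ∀ i ≤ m, iteratedDerivWithin i g I₀ =O[𝓝[I₀] 0] fun t => t ^ (τ - i)) :
    iteratedDerivWithin m (fun t => f t * g t) I₀ =O[𝓝[I₀] 0] fun t => t ^ (σ + τ - m) := by
  have hleibniz : iteratedDerivWithin m (fun t => f t * g t) I₀ =ᶠ[𝓝[I₀] 0]
      fun t => ∑ i ∈ Finset.range (m + 1),
        m.choose i * (iteratedDerivWithin i f I₀ t * iteratedDerivWithin (m - i) g I₀ t) := by
    filter_upwards [self_mem_nhdsWithin] with t ht
    simp_rw [← mul_assoc]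
    exact iteratedDerivWithin_mul ht isOpen_Ioo.uniqueDiffOn
      (hf.of_le (mod_cast le_top) t ht) (hg.of_le (mod_cast le_top) t ht)
  refine (IsBigO.fun_sum fun i hi => ?_).congr' hleibniz.symm EventuallyEq.rfl
  have him : i ≤ m := Nat.lt_succ_iff.mp (Finset.mem_range.mp hi)
  have hexp : (fun t : ℝ => t ^ (σ - i) * t ^ (τ - (m - i : ℕ))) =ᶠ[𝓝[I₀] 0]
      fun t => t ^ (σ + τ - m) := by
    filter_upwards [self_mem_nhdsWithin] with t ht
    rw [← Real.rpow_add ht.1, Nat.cast_sub him]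
    ring_nf
  exact (((hfm i him).mul (hgm (m - i) (Nat.sub_le m i))).const_mul_left _).trans_eventuallyEq
    hexp

namespace Rclass

variable {σ τ : ℝ} {f g : ℝ → ℝ}

lemma congr (hf : f ∈ Rclass σ) (h : EqOn f g I₀) : g ∈ Rclass σ := by
  rw [mem_Rclass_iff] at hf ⊢
  refine ⟨hf.1.congr fun x hx => (h hx).symm, fun m => (hf.2 m).congr' ?_ EventuallyEq.rfl⟩
  filter_upwards [self_mem_nhdsWithin] with t ht
  exact iteratedDerivWithin_congr h ht

lemma zero_mem (σ : ℝ) : (fun _ => (0 : ℝ)) ∈ Rclass σ := by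
  rw [mem_Rclass_iff]
  refine ⟨contDiffOn_const, fun m => ?_⟩
  have : iteratedDerivWithin m (fun _ => (0 : ℝ)) I₀ = 0 := by ext; simp
  exact this ▸ isBigO_zero _ _

lemma add_mem (hf : f ∈ Rclass σ) (hg : g ∈ Rclass σ) : (fun t => f t + g t) ∈ Rclass σ := by
  rw [mem_Rclass_iff] at hf hg ⊢
  refine ⟨hf.1.add hg.1, fun m => ((hf.2 m).add (hg.2 m)).congr' ?_ EventuallyEq.rfl⟩
  filter_upwards [self_mem_nhdsWithin] with t ht
  exact (iteratedDerivWithin_add ht isOpen_Ioo.uniqueDiffOn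
    ((hf.1.of_le (mod_cast le_top)) t ht) ((hg.1.of_le (mod_cast le_top)) t ht)).symm

lemma const_mul_mem (c : ℝ) (hf : f ∈ Rclass σ) : (fun t => c * f t) ∈ Rclass σ := by
  rw [mem_Rclass_iff] at hf ⊢
  refine ⟨contDiffOn_const.mul hf.1, fun m => ?_⟩
  have : iteratedDerivWithin m (fun t => c * f t) I₀ = fun t => c * iteratedDerivWithin m f I₀ t :=
    funext fun t => iteratedDerivWithin_const_mul_field c f
  exact this ▸ (hf.2 m).const_mul_left c

lemma sum_mem {ι : Type*} (s : Finset ι) {f : ι → ℝ → ℝ} (h : ∀ i ∈ s, f i ∈ Rclass σ) :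
    (fun t => ∑ i ∈ s, f i t) ∈ Rclass σ := by
  classical
  induction s using Finset.induction_on with
  | empty => simpa using zero_mem σ
  | insert i s hi ih =>
    simp_rw [Finset.sum_insert hi]
    exact add_mem (h i (Finset.mem_insert_self i s))
      (ih fun j hj => h j (Finset.mem_insert_of_mem hj))

lemma derivWithin_mem (hf : f ∈ Rclass σ) : derivWithin f I₀ ∈ Rclass (σ - 1) := by
  rw [mem_Rclass_iff] at hf ⊢
  refine ⟨hf.1.derivWithin isOpen_Ioo.uniqueDiffOn (mod_cast le_top), fun m => ?_⟩
  rw [← iteratedDerivWithin_succ']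
  convert hf.2 (m + 1) using 3
  push_cast
  ring

lemma mul_mem (hf : f ∈ Rclass σ) (hg : g ∈ Rclass τ) :
    (fun t => f t * g t) ∈ Rclass (σ + τ) := by
  rw [mem_Rclass_iff] at hf hg ⊢
  exact ⟨hf.1.mul hg.1, fun _ => isBigO_iteratedDerivWithin_mul hf.1 hg.1
    (fun i _ => hf.2 i) (fun i _ => hg.2 i)⟩

lemma exists_pos_add_mem (hf : ∃ δ > 0, f ∈ Rclass δ)
    (hg : ∃ δ > 0, g ∈ Rclass δ) : ∃ δ > 0, (fun t => f t + g t) ∈ Rclass δ := by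
  obtain ⟨δ₁, hδ₁, hf⟩ := hf
  obtain ⟨δ₂, hδ₂, hg⟩ := hg
  exact ⟨min δ₁ δ₂, lt_min hδ₁ hδ₂, add_mem (Rclass_antitone (min_le_left _ _) hf)
    (Rclass_antitone (min_le_right _ _) hg)⟩

end Rclass

lemma exists_pos_const_mul_rpow_mem_Rclass {c e : ℝ} (h : c = 0 ∨ 0 < e) :
    ∃ δ > 0, (fun t => c * t ^ e) ∈ Rclass δ := by
  rcases h with rfl | he
  · exact ⟨1, one_pos, by simpa using Rclass.zero_mem 1⟩
  · exact ⟨e, he, Rclass.const_mul_mem c (rpow_mem_Rclass e)⟩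

open Nat in
lemma taylorWithinEval_eq_sum (f : ℝ → ℝ) (N : ℕ) (s : Set ℝ) (x₀ : ℝ) :
    taylorWithinEval f N s x₀ = fun y => ∑ k ∈ Finset.range (N + 1),
      iteratedDerivWithin k f s x₀ / k ! * (y - x₀) ^ k := by
  ext y
  rw [taylor_within_apply]
  refine Finset.sum_congr rfl fun k _ => ?_
  rw [smul_eq_mul]
  ring

lemma contDiff_taylorWithinEval (f : ℝ → ℝ) (N : ℕ) (s : Set ℝ) (x₀ : ℝ) :
    ContDiff ℝ (⊤ : ℕ∞) (taylorWithinEval f N s x₀) := by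
  rw [taylorWithinEval_eq_sum]
  fun_prop

open Nat in
lemma iteratedDerivWithin_taylorWithinEval_self {s : Set ℝ} (hs : UniqueDiffOn ℝ s) {x₀ : ℝ}
    (hx₀ : x₀ ∈ s) (f : ℝ → ℝ) {N i : ℕ} (hi : i ≤ N) :
    iteratedDerivWithin i (taylorWithinEval f N s x₀) s x₀ = iteratedDerivWithin i f s x₀ := by
  rw [iteratedDerivWithin_eq_iteratedDeriv hs
    ((contDiff_taylorWithinEval f N s x₀).of_le (mod_cast le_top)).contDiffAt hx₀,
    taylorWithinEval_eq_sum, iteratedDeriv_fun_sum fun k _ => by fun_prop]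
  have hmonomial (k : ℕ) :
      iteratedDeriv i (fun y => (y - x₀) ^ k) x₀ = if i = k then (k ! : ℝ) else 0 := by
    simp only [iteratedDeriv_comp_sub_const i (fun y : ℝ => y ^ k) x₀, sub_self,
      iteratedDeriv_fun_pow_zero, Nat.cast_ite, Nat.cast_zero]
  simp [hmonomial, Nat.lt_succ_of_le hi, Nat.factorial_ne_zero]

lemma iteratedDerivWithin_sub_taylorWithinEval_self {s : Set ℝ} (hs : UniqueDiffOn ℝ s) {x₀ : ℝ}
    (hx₀ : x₀ ∈ s) {f : ℝ → ℝ} {N i : ℕ} (hf : ContDiffOn ℝ N f s) (hi : i ≤ N) :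
    iteratedDerivWithin i (f - taylorWithinEval f N s x₀) s x₀ = 0 := by
  rw [iteratedDerivWithin_sub hx₀ hs (hf.of_le (mod_cast hi) x₀ hx₀)
    ((contDiff_taylorWithinEval f N s x₀).of_le (mod_cast le_top)).contDiffWithinAt,
    iteratedDerivWithin_taylorWithinEval_self hs hx₀ f hi, sub_self]

open Nat in
lemma taylorWithinEval_succ_zero (f : ℝ → ℝ) (N : ℕ) (s : Set ℝ) (y : ℝ) :
    taylorWithinEval f (N + 1) s 0 y = f 0 + derivWithin f s 0 * y +
      ∑ k ∈ Finset.range N, iteratedDerivWithin (k + 2) f s 0 / (k + 2)! * y ^ (k + 2) := by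
  rw [taylorWithinEval_eq_sum]
  dsimp only
  rw [Finset.sum_range_succ', Finset.sum_range_succ']
  simp only [sub_zero, zero_add, iteratedDerivWithin_one, factorial_one, cast_one, div_one, pow_one,
    iteratedDerivWithin_zero, factorial_zero, pow_zero, mul_one]
  ring

open Nat in
lemma isBigO_sub_pow_of_iteratedDerivWithin_eq_zero {J : Set ℝ} (hJ : Convex ℝ J) {x₀ : ℝ}
    (hx₀ : x₀ ∈ J) {G : ℝ → ℝ} {M : ℕ} (hG : ContDiffOn ℝ M G J)
    (hvan : ∀ i < M, iteratedDerivWithin i G J x₀ = 0) :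
    G =O[𝓝[J] x₀] fun y => (y - x₀) ^ M := by
  have htaylor : taylorWithinEval G M J x₀ =
      fun y => ((M ! : ℝ)⁻¹ * iteratedDerivWithin M G J x₀) * (y - x₀) ^ M := by
    ext y
    rw [taylor_within_apply, Finset.sum_range_succ, Finset.sum_eq_zero fun i hi => by
      rw [hvan i (Finset.mem_range.mp hi), smul_zero], zero_add, smul_eq_mul]
    ring
  exact ((taylor_isLittleO hJ hx₀ hG).isBigO.add (htaylor ▸ isBigO_const_mul_self _ _ _)).congr_left
    fun y => sub_add_cancel _ _

theorem isBigO_iteratedDerivWithin_comp {J : Set ℝ} (hJ : Convex ℝ J) (hJu : UniqueDiffOn ℝ J)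
    (h0J : (0 : ℝ) ∈ J) {g : ℝ → ℝ} {δ : ℝ} (hδ : 0 < δ) (hg : g ∈ Rclass δ)
    (hmap : MapsTo g I₀ J) (hlim : Tendsto g (𝓝[I₀] 0) (𝓝 0)) {G : ℝ → ℝ}
    (hG : ContDiffOn ℝ (⊤ : ℕ∞) G J) {M : ℕ} (hvan : ∀ i < M, iteratedDerivWithin i G J 0 = 0)
    (m : ℕ) :
    iteratedDerivWithin m (fun t => G (g t)) I₀ =O[𝓝[I₀] 0] fun t => t ^ (M * δ - m) := by
  -- Strong induction on `m`: `(G ∘ g)' = (G' ∘ g) * g'` with `G'` vanishing to order `M - 1`.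
  obtain ⟨hg_smooth, hg_bound⟩ := mem_Rclass_iff.mp hg
  induction m using Nat.strong_induction_on generalizing M G with
  | _ m ih =>
  cases m with
  | zero =>
    have hgJ : Tendsto g (𝓝[I₀] 0) (𝓝[J] 0) :=
      tendsto_nhdsWithin_iff.mpr ⟨hlim, eventually_of_mem self_mem_nhdsWithin hmap⟩
    have hGg : (fun t => G (g t)) =O[𝓝[I₀] 0] fun t => g t ^ M := by
      simpa [Function.comp_def] using (isBigO_sub_pow_of_iteratedDerivWithin_eq_zero hJ h0J
        (hG.of_le (mod_cast le_top)) hvan).comp_tendsto hgJ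
    have hgδ : g =O[𝓝[I₀] 0] fun t => t ^ δ := by simpa using hg_bound 0
    simp only [iteratedDerivWithin_zero, Nat.cast_zero, sub_zero]
    refine (hGg.trans (hgδ.pow M)).trans_eventuallyEq ?_
    filter_upwards [self_mem_nhdsWithin] with t ht
    rw [← Real.rpow_natCast, ← Real.rpow_mul ht.1.le, mul_comm]
  | succ k =>
    have hG' : ContDiffOn ℝ (⊤ : ℕ∞) (derivWithin G J) J := hG.derivWithin hJu (mod_cast le_top)
    have hvan' : ∀ i < M - 1, iteratedDerivWithin i (derivWithin G J) J 0 = 0 := fun i hi => by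
      rw [← iteratedDerivWithin_succ']
      exact hvan (i + 1) (by omega)
    have hchain : EqOn (derivWithin (fun t => G (g t)) I₀)
        (fun t => derivWithin G J (g t) * derivWithin g I₀ t) I₀ := fun t ht =>
      derivWithin_comp t (hG.differentiableOn (by simp) _ (hmap ht))
        (hg_smooth.differentiableOn (by simp) t ht) hmap
    have hprod := isBigO_iteratedDerivWithin_mul (m := k) (hG'.comp hg_smooth hmap)
      (hg_smooth.derivWithin isOpen_Ioo.uniqueDiffOn (mod_cast le_top))
      (fun i hi => ih i (by omega) hG' hvan')
      (fun i _ => (mem_Rclass_iff.mp (Rclass.derivWithin_mem hg)).2 i)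
    rw [iteratedDerivWithin_succ']
    refine (hprod.congr' ?_ EventuallyEq.rfl).trans (rpow_isBigO_rpow_of_le ?_)
    · filter_upwards [self_mem_nhdsWithin] with t ht
      exact (iteratedDerivWithin_congr hchain ht).symm
    · -- `(M - 1 : ℕ) + 1 ≥ M` also when `M = 0`, where the bound is merely weakened.
      have : (M : ℝ) ≤ ((M - 1 : ℕ) : ℝ) + 1 := by norm_cast; omega
      push_cast
      nlinarith

theorem comp_mem_Rclass {J : Set ℝ} (hJ : Convex ℝ J) (hJu : UniqueDiffOn ℝ J)
    (h0J : (0 : ℝ) ∈ J) {g : ℝ → ℝ} {δ : ℝ} (hδ : 0 < δ) (hg : g ∈ Rclass δ)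
    (hmap : MapsTo g I₀ J) (hlim : Tendsto g (𝓝[I₀] 0) (𝓝 0)) {G : ℝ → ℝ}
    (hG : ContDiffOn ℝ (⊤ : ℕ∞) G J) {M : ℕ} (hvan : ∀ i < M, iteratedDerivWithin i G J 0 = 0) :
    (fun t => G (g t)) ∈ Rclass (M * δ) :=
  mem_Rclass_iff.mpr ⟨hG.comp hg.1 hmap, fun m =>
    isBigO_iteratedDerivWithin_comp hJ hJu h0J hδ hg hmap hlim hG hvan m⟩

def IsAdmissibleExponent (α β e : ℝ) : Prop :=
  ((∃ z : ℤ, e = z) → α < e) ∧ ((¬∃ z : ℤ, e = z) → β < e)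

namespace IsAdmissibleExponent

variable {α β e e₁ e₂ : ℝ}

lemma of_lt (hα : α < e) (hβ : β < e) : IsAdmissibleExponent α β e :=
  ⟨fun _ => hα, fun _ => hβ⟩

lemma lt_of_le (hαβ : α ≤ β) (h : IsAdmissibleExponent α β e) : α < e := by
  by_cases hz : ∃ z : ℤ, e = z
  · exact h.1 hz
  · exact hαβ.trans_lt (h.2 hz)

lemma pos (hα : 0 ≤ α) (hαβ : α ≤ β) (h : IsAdmissibleExponent α β e) : 0 < e :=
  hα.trans_lt (h.lt_of_le hαβ)

lemma add (hα : 0 ≤ α) (hαβ : α ≤ β) (h₁ : IsAdmissibleExponent α β e₁)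
    (h₂ : IsAdmissibleExponent α β e₂) : IsAdmissibleExponent α β (e₁ + e₂) := by
  have := h₁.lt_of_le hαβ
  have := h₁.pos hα hαβ
  have := h₂.pos hα hαβ
  refine ⟨fun _ => by linarith, fun hn => ?_⟩
  by_cases hz₁ : ∃ z : ℤ, e₁ = z
  · by_cases hz₂ : ∃ z : ℤ, e₂ = z
    · obtain ⟨z₁, rfl⟩ := hz₁
      obtain ⟨z₂, rfl⟩ := hz₂
      exact absurd ⟨z₁ + z₂, by push_cast; ring⟩ hn
    · linarith [h₂.2 hz₂]
  · linarith [h₁.2 hz₁]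

lemma add_natCast (h : IsAdmissibleExponent α β e) (n : ℕ) :
    IsAdmissibleExponent α β (e + n) := by
  refine ⟨fun ⟨z, hz⟩ => ?_, fun hn => ?_⟩
  · have := h.1 ⟨z - n, by push_cast; linarith⟩
    linarith [n.cast_nonneg (α := ℝ)]
  · have := h.2 fun ⟨z, hz⟩ => hn ⟨z + n, by push_cast [hz]; ring⟩
    linarith [n.cast_nonneg (α := ℝ)]

lemma add_of_le (hα : 0 ≤ α) (hαβ : α ≤ β) (h : IsAdmissibleExponent α β e) {μ : ℝ}
    (hμ : β ≤ μ) : IsAdmissibleExponent α β (e + μ) := by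
  have := h.pos hα hαβ
  exact of_lt (by linarith) (by linarith)

end IsAdmissibleExponent

lemma mem_Pclass_iff {α β : ℝ} {p : ℝ → ℝ} :
    p ∈ Pclass α β ↔ ∃ (n : ℕ) (c e : Fin n → ℝ), (∀ i, IsAdmissibleExponent α β (e i)) ∧
      EqOn p (fun t => ∑ i, c i * t ^ e i) I₀ := by
  simp only [Pclass, mem_ofPred_eq, IsAdmissibleExponent, forall_and, and_assoc]
  rfl

namespace Pclass

variable {α β : ℝ} {p p₁ p₂ : ℝ → ℝ}

lemma zero_mem : (fun _ => (0 : ℝ)) ∈ Pclass α β :=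
  mem_Pclass_iff.mpr ⟨0, Fin.elim0, Fin.elim0, Fin.rec0, fun t _ => by simp⟩

lemma monomial_mem {c e : ℝ} (h : c = 0 ∨ IsAdmissibleExponent α β e) :
    (fun t : ℝ => c * t ^ e) ∈ Pclass α β := by
  rcases h with rfl | h
  · simpa using zero_mem
  · exact mem_Pclass_iff.mpr ⟨1, fun _ => c, fun _ => e, fun _ => h, fun t _ => by simp⟩

lemma add_mem (h₁ : p₁ ∈ Pclass α β) (h₂ : p₂ ∈ Pclass α β) :
    (fun t => p₁ t + p₂ t) ∈ Pclass α β := by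
  obtain ⟨n₁, c₁, e₁, he₁, hp₁⟩ := mem_Pclass_iff.mp h₁
  obtain ⟨n₂, c₂, e₂, he₂, hp₂⟩ := mem_Pclass_iff.mp h₂
  refine mem_Pclass_iff.mpr ⟨n₁ + n₂, Fin.append c₁ c₂, Fin.append e₁ e₂,
    Fin.addCases (by simpa using he₁) (by simpa using he₂), fun t ht => ?_⟩
  simp [hp₁ ht, hp₂ ht, Fin.sum_univ_add]

lemma const_mul_mem (c : ℝ) (hp : p ∈ Pclass α β) : (fun t => c * p t) ∈ Pclass α β := by
  obtain ⟨n, a, e, he, hp⟩ := mem_Pclass_iff.mp hp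
  refine mem_Pclass_iff.mpr ⟨n, fun i => c * a i, e, he, fun t ht => ?_⟩
  simp only [hp ht, Finset.mul_sum, mul_assoc]

lemma rpow_mul_mem {μ : ℝ} (hμ : ∀ e, IsAdmissibleExponent α β e → IsAdmissibleExponent α β (e + μ))
    (hp : p ∈ Pclass α β) : (fun t => t ^ μ * p t) ∈ Pclass α β := by
  obtain ⟨n, c, e, he, hp⟩ := mem_Pclass_iff.mp hp
  refine mem_Pclass_iff.mpr ⟨n, c, fun i => e i + μ, fun i => hμ _ (he i), fun t ht => ?_⟩
  simp only [hp ht, Finset.mul_sum, Real.rpow_add ht.1]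
  exact Finset.sum_congr rfl fun i _ => by ring

lemma mul_mem (hα : 0 ≤ α) (hαβ : α ≤ β) (h₁ : p₁ ∈ Pclass α β) (h₂ : p₂ ∈ Pclass α β) :
    (fun t => p₁ t * p₂ t) ∈ Pclass α β := by
  obtain ⟨n₁, c₁, e₁, he₁, hp₁⟩ := mem_Pclass_iff.mp h₁
  obtain ⟨n₂, c₂, e₂, he₂, hp₂⟩ := mem_Pclass_iff.mp h₂
  let ij : Fin (n₁ * n₂) ≃ Fin n₁ × Fin n₂ := finProdFinEquiv.symm
  refine mem_Pclass_iff.mpr ⟨n₁ * n₂, fun k => c₁ (ij k).1 * c₂ (ij k).2,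
    fun k => e₁ (ij k).1 + e₂ (ij k).2, fun k => (he₁ _).add hα hαβ (he₂ _), fun t ht => ?_⟩
  beta_reduce
  rw [hp₁ ht, hp₂ ht, Finset.sum_mul_sum, ← Finset.sum_product', Finset.univ_product_univ]
  refine Fintype.sum_equiv ij.symm _ _ fun k => ?_
  simp only [Equiv.apply_symm_apply, Real.rpow_add ht.1]
  ring

lemma exists_pos_mem_Rclass (hα : 0 ≤ α) (hαβ : α ≤ β) (hp : p ∈ Pclass α β) :
    ∃ δ > 0, p ∈ Rclass δ := by
  obtain ⟨n, c, e, he, hp⟩ := mem_Pclass_iff.mp hp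
  have hsmall : ∀ᶠ δ in 𝓝[>] (0 : ℝ), ∀ i, δ ≤ e i :=
    eventually_all.mpr fun i => nhdsWithin_le_nhds (eventually_le_nhds ((he i).pos hα hαβ))
  obtain ⟨δ, hδe, hδ⟩ := (hsmall.and self_mem_nhdsWithin).exists
  refine ⟨δ, hδ, Rclass.congr (Rclass.sum_mem _ fun i _ => ?_) fun t ht => (hp ht).symm⟩
  exact Rclass_antitone (hδe i) (Rclass.const_mul_mem (c i) (rpow_mem_Rclass (e i)))

lemma mem_Rclass_zero (hα : 0 ≤ α) (hαβ : α ≤ β) (hp : p ∈ Pclass α β) : p ∈ Rclass 0 :=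
  let ⟨_, hδ, hpδ⟩ := exists_pos_mem_Rclass hα hαβ hp
  Rclass_antitone hδ.le hpδ

end Pclass

lemma Pclass_subset_Qclass {α β : ℝ} : Pclass α β ⊆ Qclass α β :=
  fun p hp γ' => ⟨p, hp, _, Rclass.zero_mem γ', fun _ _ => (add_zero _).symm⟩

namespace Qclass

variable {α β : ℝ} {f g : ℝ → ℝ}

lemma congr (hf : f ∈ Qclass α β) (h : EqOn f g I₀) : g ∈ Qclass α β := fun γ' => by
  obtain ⟨p, hp, r, hr, hfpr⟩ := hf γ'
  exact ⟨p, hp, r, hr, fun t ht => h ht ▸ hfpr t ht⟩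

lemma of_forall_exists_Rclass
    (h : ∀ γ', ∃ g ∈ Qclass α β, ∃ r ∈ Rclass γ', ∀ t ∈ I₀, f t = g t + r t) :
    f ∈ Qclass α β := fun γ' => by
  obtain ⟨g, hg, r, hr, hfgr⟩ := h γ'
  obtain ⟨p, hp, r', hr', hgpr⟩ := hg γ'
  exact ⟨p, hp, _, Rclass.add_mem hr' hr, fun t ht => by rw [hfgr t ht, hgpr t ht, add_assoc]⟩

lemma add_mem (hf : f ∈ Qclass α β) (hg : g ∈ Qclass α β) :
    (fun t => f t + g t) ∈ Qclass α β := fun γ' => by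
  obtain ⟨p₁, hp₁, r₁, hr₁, hf⟩ := hf γ'
  obtain ⟨p₂, hp₂, r₂, hr₂, hg⟩ := hg γ'
  exact ⟨_, Pclass.add_mem hp₁ hp₂, _, Rclass.add_mem hr₁ hr₂, fun t ht => by
    simp only [hf t ht, hg t ht]; ring⟩

lemma const_mul_mem (c : ℝ) (hf : f ∈ Qclass α β) : (fun t => c * f t) ∈ Qclass α β :=
  fun γ' => by
  obtain ⟨p, hp, r, hr, hf⟩ := hf γ'
  exact ⟨_, Pclass.const_mul_mem c hp, _, Rclass.const_mul_mem c hr, fun t ht => by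
    simp only [hf t ht, mul_add]⟩

lemma sum_mem {ι : Type*} (s : Finset ι) {f : ι → ℝ → ℝ} (h : ∀ i ∈ s, f i ∈ Qclass α β) :
    (fun t => ∑ i ∈ s, f i t) ∈ Qclass α β := by
  classical
  induction s using Finset.induction_on with
  | empty => simpa using Pclass_subset_Qclass Pclass.zero_mem
  | insert i s hi ih =>
    simp_rw [Finset.sum_insert hi]
    exact add_mem (h i (Finset.mem_insert_self i s))
      (ih fun j hj => h j (Finset.mem_insert_of_mem hj))

lemma rpow_mul_mem {μ : ℝ} (hμ₀ : 0 ≤ μ)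
    (hμ : ∀ e, IsAdmissibleExponent α β e → IsAdmissibleExponent α β (e + μ))
    (hf : f ∈ Qclass α β) : (fun t => t ^ μ * f t) ∈ Qclass α β := fun γ' => by
  obtain ⟨p, hp, r, hr, hf⟩ := hf γ'
  have hrμ := Rclass.mul_mem (Rclass_antitone hμ₀ (rpow_mem_Rclass μ)) hr
  rw [zero_add] at hrμ
  exact ⟨_, Pclass.rpow_mul_mem hμ hp, _, hrμ, fun t ht => by simp only [hf t ht, mul_add]⟩

lemma exists_pos_mem_Rclass (hα : 0 ≤ α) (hαβ : α ≤ β) (hf : f ∈ Qclass α β) :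
    ∃ δ > 0, f ∈ Rclass δ := by
  obtain ⟨p, hp, r, hr, hf⟩ := hf 1
  obtain ⟨δ, hδ, hpδ⟩ := Pclass.exists_pos_mem_Rclass hα hαβ hp
  refine ⟨min δ 1, lt_min hδ one_pos, Rclass.congr (Rclass.add_mem
    (Rclass_antitone (min_le_left _ _) hpδ) (Rclass_antitone (min_le_right _ _) hr))
    fun t ht => (hf t ht).symm⟩

lemma mul_mem (hα : 0 ≤ α) (hαβ : α ≤ β) (hf : f ∈ Qclass α β) (hg : g ∈ Qclass α β) :
    (fun t => f t * g t) ∈ Qclass α β := fun γ' => by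
  obtain ⟨p₁, hp₁, r₁, hr₁, hf⟩ := hf |γ'|
  obtain ⟨p₂, hp₂, r₂, hr₂, hg⟩ := hg |γ'|
  have hp₁R := Pclass.mem_Rclass_zero hα hαβ hp₁
  have hp₂R := Pclass.mem_Rclass_zero hα hαβ hp₂
  have hγ := le_abs_self γ'
  have hγ₀ := abs_nonneg γ'
  refine ⟨_, Pclass.mul_mem hα hαβ hp₁ hp₂, _,
    Rclass.add_mem (Rclass_antitone (by linarith) (Rclass.mul_mem hp₁R hr₂))
      (Rclass.add_mem (Rclass_antitone (by linarith) (Rclass.mul_mem hr₁ hp₂R))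
        (Rclass_antitone (by linarith) (Rclass.mul_mem hr₁ hr₂))),
    fun t ht => by simp only [hf t ht, hg t ht]; ring⟩

end Qclass

lemma eq_zero_or_one_le_natCast {n : ℕ} {a : ℝ} (h : n = 0 → a = 0) : a = 0 ∨ (1 : ℝ) ≤ n := by
  rcases Nat.eq_zero_or_pos n with hn | hn
  · exact .inl (h hn)
  · exact .inr (mod_cast hn)

lemma eq_zero_or_pos_of_nonneg {β b : ℝ} (hβ : 0 ≤ β) (h : β = 0 → b = 0) : b = 0 ∨ 0 < β := by
  rcases hβ.eq_or_lt with hβ | hβ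
  · exact .inl (h hβ.symm)
  · exact .inr hβ

section Expansion

variable {α : ℕ} {β : ℝ}

lemma principalPart_mul_mem_Qclass (hβ : (α : ℝ) ≤ β) (a b : ℝ) {f : ℝ → ℝ}
    (hf : f ∈ Qclass α β) : (fun t => (a * t ^ (α : ℝ) + b * t ^ β) * f t) ∈ Qclass α β := by
  have hα : (0 : ℝ) ≤ α := α.cast_nonneg
  refine Qclass.congr (Qclass.add_mem
    (Qclass.const_mul_mem a (Qclass.rpow_mul_mem hα (fun e he => he.add_natCast α) hf))
    (Qclass.const_mul_mem b (Qclass.rpow_mul_mem (hα.trans hβ)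
      (fun e he => he.add_of_le hα hβ le_rfl) hf))) fun t _ => ?_
  ring

variable {a b : ℝ}

lemma principalPart_sq_mem_Qclass (hβ : (α : ℝ) ≤ β) (ha : α = 0 → a = 0)
    (hb : β = 0 → b = 0) : (fun t => (a * t ^ (α : ℝ) + b * t ^ β) ^ 2) ∈ Qclass α β := by
  have ha' := eq_zero_or_one_le_natCast ha
  have hb' := eq_zero_or_pos_of_nonneg (α.cast_nonneg.trans hβ) hb
  have h₁ : a * a = 0 ∨ IsAdmissibleExponent α β (α + α) := by
    rcases ha' with rfl | hα
    · exact .inl (zero_mul _)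
    · exact .inr ⟨fun _ => by linarith, fun hn => absurd ⟨α + α, by push_cast; ring⟩ hn⟩
  have h₂ : 2 * a * b = 0 ∨ IsAdmissibleExponent α β (α + β) := by
    rcases ha' with rfl | hα
    · exact .inl (by ring)
    rcases hb' with rfl | hβ₀
    · exact .inl (by ring)
    · exact .inr (.of_lt (by linarith) (by linarith))
  have h₃ : b * b = 0 ∨ IsAdmissibleExponent α β (β + β) := by
    rcases hb' with rfl | hβ₀
    · exact .inl (zero_mul _)
    · exact .inr (.of_lt (by linarith) (by linarith))
  refine Qclass.congr (Pclass_subset_Qclass (Pclass.add_mem (Pclass.monomial_mem h₁)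
    (Pclass.add_mem (Pclass.monomial_mem h₂) (Pclass.monomial_mem h₃)))) fun t ht => ?_
  simp only [Real.rpow_add ht.1]
  ring

variable {g q : ℝ → ℝ}

lemma pow_add_two_mem_Qclass (hβ : (α : ℝ) ≤ β) (ha : α = 0 → a = 0) (hb : β = 0 → b = 0)
    (hq : q ∈ Qclass α β) (hg : ∀ t ∈ I₀, g t = a * t ^ (α : ℝ) + b * t ^ β + q t) (k : ℕ) :
    (fun t => g t ^ (k + 2)) ∈ Qclass α β := by
  have hmul : ∀ f ∈ Qclass α β, (fun t => g t * f t) ∈ Qclass α β := fun f hf =>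
    Qclass.congr (Qclass.add_mem (principalPart_mul_mem_Qclass hβ a b hf)
      (Qclass.mul_mem α.cast_nonneg hβ hq hf)) fun t ht => by simp only [hg t ht]; ring
  induction k with
  | zero =>
    refine Qclass.congr (Qclass.add_mem (principalPart_sq_mem_Qclass hβ ha hb)
      (Qclass.add_mem (principalPart_mul_mem_Qclass hβ a b hq) (hmul q hq))) fun t ht => ?_
    simp only [hg t ht]
    ring
  | succ k ih => exact Qclass.congr (hmul _ ih) fun t _ => by ring

lemma exists_pos_mem_Rclass_of_expansion (hβ : (α : ℝ) ≤ β) (ha : α = 0 → a = 0)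
    (hb : β = 0 → b = 0) (hq : q ∈ Qclass α β)
    (hg : ∀ t ∈ I₀, g t = a * t ^ (α : ℝ) + b * t ^ β + q t) : ∃ δ > 0, g ∈ Rclass δ := by
  have ha' := (eq_zero_or_one_le_natCast ha).imp_right zero_lt_one.trans_le
  have hb' := eq_zero_or_pos_of_nonneg (α.cast_nonneg.trans hβ) hb
  obtain ⟨δ, hδ, hgδ⟩ := Rclass.exists_pos_add_mem (Rclass.exists_pos_add_mem
    (exists_pos_const_mul_rpow_mem_Rclass ha') (exists_pos_const_mul_rpow_mem_Rclass hb'))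
    (Qclass.exists_pos_mem_Rclass α.cast_nonneg hβ hq)
  exact ⟨δ, hδ, Rclass.congr hgδ fun t ht => (hg t ht).symm⟩

end Expansion

/-- composition with a `C^∞` function: if
`g₁(t) = a t^α + b t^β + Q_{α,β}(t)` maps `(0,2)` into an interval `J ∋ 0` with
`g₁(t) → 0` as `t ↓ 0`, and `g₂ ∈ C^∞(J)`, then
`g₂(g₁(t)) = g₂(0) + g₂'(0) a t^α + g₂'(0) b t^β + Q_{α,β}(t)`. -/
theorem Qclass_comp_smooth (J : Set ℝ) (hJ : J.OrdConnected) (h0J : (0 : ℝ) ∈ J)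
    (α : ℕ) (β : ℝ) (hβ : (α : ℝ) ≤ β) (a b : ℝ)
    (ha : α = 0 → a = 0) (hb : β = 0 → b = 0)
    (g₁ g₂ q : ℝ → ℝ)
    (hmap : ∀ t ∈ Set.Ioo (0 : ℝ) 2, g₁ t ∈ J)
    (hlim : Tendsto g₁ (nhdsWithin 0 (Set.Ioo (0 : ℝ) 2)) (nhds 0))
    (hq : q ∈ Qclass (α : ℝ) β)
    (hg₁ : ∀ t ∈ Set.Ioo (0 : ℝ) 2, g₁ t = a * t ^ (α : ℝ) + b * t ^ β + q t)
    (hg₂ : ContDiffOn ℝ (⊤ : ℕ∞) g₂ J) :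
    (fun t : ℝ => g₂ (g₁ t) - g₂ 0 - derivWithin g₂ J 0 * a * t ^ (α : ℝ)
        - derivWithin g₂ J 0 * b * t ^ β) ∈ Qclass (α : ℝ) β := by
  rcases J.subsingleton_or_nontrivial with hJ₁ | hJ₁
  · refine Qclass.congr (Qclass.const_mul_mem (derivWithin g₂ J 0) hq) fun t ht => ?_
    have hg₁t := hg₁ t ht
    rw [hJ₁ (hmap t ht) h0J] at hg₁t ⊢
    linear_combination -derivWithin g₂ J 0 * hg₁t
  have hJu : UniqueDiffOn ℝ J :=
    uniqueDiffOn_convex hJ.convex (hJ.convex.nontrivial_iff_nonempty_interior.mp hJ₁)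
  obtain ⟨δ, hδ, hg₁R⟩ := exists_pos_mem_Rclass_of_expansion hβ ha hb hq hg₁
  refine Qclass.of_forall_exists_Rclass fun γ' => ?_
  obtain ⟨N, hN⟩ := exists_nat_ge (γ' / δ)
  set G := g₂ - taylorWithinEval g₂ (N + 1) J 0
  have hG : ContDiffOn ℝ (⊤ : ℕ∞) G J := hg₂.sub (contDiff_taylorWithinEval _ _ _ _).contDiffOn
  have hvan : ∀ i < N + 2, iteratedDerivWithin i G J 0 = 0 := fun i hi =>
    iteratedDerivWithin_sub_taylorWithinEval_self hJu h0J (hg₂.of_le (mod_cast le_top)) (by omega)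
  refine ⟨_, Qclass.add_mem (Qclass.const_mul_mem (derivWithin g₂ J 0) hq)
    (Qclass.sum_mem (Finset.range N) fun k _ => Qclass.const_mul_mem
      (iteratedDerivWithin (k + 2) g₂ J 0 / (k + 2).factorial)
      (pow_add_two_mem_Qclass hβ ha hb hq hg₁ k)), _,
    Rclass_antitone ?_ (comp_mem_Rclass hJ.convex hJu h0J hδ hg₁R hmap hlim hG hvan),
    fun t ht => ?_⟩
  · rw [div_le_iff₀ hδ] at hN
    push_cast
    nlinarith
  · simp only [G, Pi.sub_apply, taylorWithinEval_succ_zero, hg₁ t ht]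
    ring
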